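/- arXiv:1209.2042 — 3 statements merged into one kernel-verified Lean document; each statement's English description precedes it below -/
import Mathlib

section
/- Let S be a Noetherian topological space equipped with an associative multiplication S × S → S for which all left and right translations y ↦ ay and y ↦ ya are continuous. Let x ∈ S be such that for every integer n ≥ 1 the closure of the set {x^{nm} : m ≥ 1} of positive powers of x^n equals S. Then the set xS = {xy : y ∈ S} is dense in S, and S is irreducible. -/
/-!
Right multiplication by `x` is a continuous self-map `f` of `S`, and `x^(k+1) = f^[k] x`.
Since `f` maps irreducible components into irreducible components and there are finitely many
of them, the components met by the orbit of `x` are eventually periodic. For suitable `n` this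
gives a single component `E` containing `f^[n] x` and mapped into itself by `f^[n+1]`, so `E`
contains the dense set `{x^((n+1)(m+1))}`; being closed, `E` is all of `S`.
-/

/-- `sPow mul x n` is the `(n+1)`-st power `x^(n+1)` of `x` with respect to the
multiplication `mul`; thus it ranges over all positive powers of `x` as `n` ranges over `ℕ`. -/
def sPow {S : Type*} (mul : S → S → S) (x : S) : ℕ → S
  | 0 => x
  | n + 1 => mul (sPow mul x n) x

open Function Set TopologicalSpace

namespace Finite

variable {α : Type*} [Finite α]

theorem exists_isPeriodicPt_iterate (g : α → α) (c : α) :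
    ∃ a q : ℕ, IsPeriodicPt g (q + 1) (g^[a] c) := by
  obtain ⟨a, b, hab, heq⟩ := exists_ne_map_eq_of_infinite fun n : ℕ => g^[n] c
  wlog hlt : a < b generalizing a b
  · exact this b a hab.symm heq.symm (by omega)
  refine ⟨a, b - a - 1, ?_⟩
  rw [IsPeriodicPt, IsFixedPt, ← iterate_add_apply, show b - a - 1 + 1 + a = b by omega]
  exact heq.symm

theorem exists_isPeriodicPt_succ_iterate_self (g : α → α) (c : α) :
    ∃ n : ℕ, IsPeriodicPt g (n + 1) (g^[n] c) := by
  obtain ⟨a, q, hper⟩ := exists_isPeriodicPt_iterate g c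
  refine ⟨q * (a + 1) + a, ?_⟩
  rw [iterate_add_apply, show q * (a + 1) + a + 1 = (q + 1) * (a + 1) by ring]
  exact (hper.mul_const (a + 1)).apply_iterate _

end Finite

theorem exists_mapsTo_irreducibleComponents {X Y : Type*} [TopologicalSpace X]
    [TopologicalSpace Y] {f : X → Y} (hf : Continuous f) {C : Set X}
    (hC : C ∈ irreducibleComponents X) : ∃ D ∈ irreducibleComponents Y, MapsTo f C D := by
  obtain ⟨D, hD, hsub⟩ :=
    exists_mem_irreducibleComponents_subset_of_isIrreducible _ (hC.1.image f hf.continuousOn)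
  exact ⟨D, hD, mapsTo_iff_image_subset.2 hsub⟩

theorem TopologicalSpace.NoetherianSpace.irreducibleSpace_of_dense_orbit {X : Type*}
    [TopologicalSpace X] [NoetherianSpace X] {f : X → X} (hf : Continuous f) (x : X)
    (hdense : ∀ n : ℕ, Dense (Set.range fun m : ℕ => (f^[n + 1])^[m] (f^[n] x))) :
    IrreducibleSpace X := by
  have : Finite (irreducibleComponents X) := finite_irreducibleComponents.to_subtype
  choose g hg using fun C : irreducibleComponents X =>
    let ⟨D, hD, hmaps⟩ := exists_mapsTo_irreducibleComponents hf C.2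
    (⟨⟨D, hD⟩, hmaps⟩ : ∃ D : irreducibleComponents X, MapsTo f C D)
  have hg_iterate :
      ∀ k (C : irreducibleComponents X), MapsTo f^[k] C (g^[k] C : irreducibleComponents X) := by
    intro k
    induction k with
    | zero => exact fun C => mapsTo_id _
    | succ k ih => exact fun C => (ih (g C)).comp (hg C)
  let c₀ : irreducibleComponents X :=
    ⟨irreducibleComponent x, irreducibleComponent_mem_irreducibleComponents x⟩
  obtain ⟨n, hn⟩ := Finite.exists_isPeriodicPt_succ_iterate_self g c₀
  set E := g^[n] c₀
  have hE_invariant : MapsTo f^[n + 1] E E := by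
    simpa only [hn.eq] using hg_iterate (n + 1) E
  have horbit : Set.range (fun m : ℕ => (f^[n + 1])^[m] (f^[n] x)) ⊆ (E : Set X) := by
    rintro _ ⟨m, rfl⟩
    exact hE_invariant.iterate m (hg_iterate n c₀ mem_irreducibleComponent)
  have hE_univ : (E : Set X) = univ := by
    rw [← (isClosed_of_mem_irreducibleComponents _ E.2).closure_eq]
    exact ((hdense n).mono horbit).closure_eq
  exact (irreducibleSpace_def X).2 (hE_univ ▸ E.2.1 : IsIrreducible (univ : Set X))

section Semigroup

variable {S : Type*} (mul : S → S → S)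

theorem sPow_eq_iterate (x : S) (n : ℕ) : sPow mul x n = (fun y => mul y x)^[n] x := by
  induction n with
  | zero => rfl
  | succ n ih => rw [iterate_succ_apply', ← ih]; rfl

theorem sPow_succ_eq_mul_left (hassoc : ∀ a b c : S, mul (mul a b) c = mul a (mul b c))
    (x : S) (n : ℕ) : sPow mul x (n + 1) = mul x (sPow mul x n) := by
  induction n with
  | zero => rfl
  | succ n ih =>
    show mul (sPow mul x (n + 1)) x = mul x (mul (sPow mul x n) x)
    rw [ih, hassoc]

end Semigroup

theorem stmt_2_general {S : Type*} [TopologicalSpace S] [TopologicalSpace.NoetherianSpace S]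
    (mul : S → S → S)
    (hassoc : ∀ a b c : S, mul (mul a b) c = mul a (mul b c))
    (hcontr : ∀ a : S, Continuous fun y => mul y a)
    (x : S)
    (hx : ∀ n : ℕ, Dense {y : S | ∃ m : ℕ, y = sPow mul x (n * m + n + m)}) :
    Dense (Set.range (mul x)) ∧ IrreducibleSpace S := by
  constructor
  · refine (hx 1).mono ?_
    rintro _ ⟨m, rfl⟩
    rw [show 1 * m + 1 + m = m + m + 1 by omega, sPow_succ_eq_mul_left mul hassoc]
    exact mem_range_self _
  · refine NoetherianSpace.irreducibleSpace_of_dense_orbit (hcontr x) x fun n => (hx n).mono ?_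
    rintro _ ⟨m, rfl⟩
    refine ⟨m, ?_⟩
    dsimp only
    rw [sPow_eq_iterate, ← iterate_mul, ← iterate_add_apply,
      show n * m + n + m = (n + 1) * m + n by ring]

/-- Let `S` be a Noetherian topological space with an associative multiplication whose left
and right translations are continuous.  Let `x ∈ S` be such that for every `n ≥ 1` the set
`{x^(n·m) : m ≥ 1}` of positive powers of `x^n` is dense in `S`.  Then `xS` is dense in `S`
and `S` is irreducible.  (Here, for `n, m : ℕ`, the exponent `(n+1)(m+1)` is written as
`n*m + n + m + 1`, i.e. `sPow mul x (n*m + n + m) = x^((n+1)(m+1))`.) -/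
theorem stmt_2 {S : Type*} [TopologicalSpace S] [TopologicalSpace.NoetherianSpace S]
    (mul : S → S → S)
    (hassoc : ∀ a b c : S, mul (mul a b) c = mul a (mul b c))
    (hcontl : ∀ a : S, Continuous fun y => mul a y)
    (hcontr : ∀ a : S, Continuous fun y => mul y a)
    (x : S)
    (hx : ∀ n : ℕ, Dense {y : S | ∃ m : ℕ, y = sPow mul x (n * m + n + m)}) :
    Dense (Set.range (mul x)) ∧ IrreducibleSpace S :=
  stmt_2_general mul hassoc hcontr x hx
end

section
/- Let S be an irreducible topological space equipped with an associative multiplication S × S → S for which all left and right translations are continuous, and suppose the topological Krull dimension of S is finite, equal to d − 1 (so d = dim S + 1). Then for every y ∈ S and every integer m ≥ d, the closure of y^m S equals the closure of y^d S. -/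
/-!
Left translation `L = mul y` turns `y^m S` into `L^[m] (univ)`. The closures
`Z k = closure (range L^[k])` are irreducible closed sets with `Z (k + 1) = closure (L '' Z k)`,
so they form a decreasing chain driven by a monotone self-map of the irreducible closed sets.
A strictly decreasing stretch `Z 0 ⊋ ⋯ ⊋ Z d` would have length `d > dim S`, so `Z k = Z (k + 1)`
for some `k < d`, and from then on the chain is constant.
-/

open Function Order Set TopologicalSpace

namespace Monotone

variable {α : Type*} [PartialOrder α] {g : α → α} {x : α} {n : ℕ}

theorem exists_isFixedPt_iterate_of_krullDim_lt (hg : Monotone g) (hx : g x ≤ x)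
    (hn : krullDim α < n) : ∃ k < n, IsFixedPt g (g^[k] x) := by
  by_contra! hmoves
  have hstep : ∀ k : Fin n, g^[k + 1] x < g^[k] x := fun k =>
    (hg.antitone_iterate_of_map_le hx (Nat.le_succ k)).lt_of_ne fun h =>
      hmoves k k.isLt (by rwa [IsFixedPt, ← iterate_succ_apply' g])
  let chain : LTSeries αᵒᵈ :=
    .mk n (fun k => OrderDual.toDual (g^[k] x)) (Fin.strictMono_iff_lt_succ.mpr hstep)
  exact (krullDim_orderDual (α := α) ▸ chain.length_le_krullDim).not_gt hn

theorem iterate_eq_of_krullDim_lt (hg : Monotone g) (hx : g x ≤ x) (hn : krullDim α < n)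
    {m : ℕ} (hm : n ≤ m) : g^[m] x = g^[n] x := by
  obtain ⟨k, hkn, hk⟩ := hg.exists_isFixedPt_iterate_of_krullDim_lt hx hn
  have hstable : ∀ l, k ≤ l → g^[l] x = g^[k] x := fun l hl => by
    rw [← Nat.sub_add_cancel hl, iterate_add_apply, (hk.iterate _).eq]
  rw [hstable m (by omega), hstable n hkn.le]

end Monotone

section IterateRange

variable {X : Type*} [TopologicalSpace X] [IrreducibleSpace X] {f : X → X}

theorem coe_iterate_irreducibleClosedsMap_univ (hf : Continuous f) (k : ℕ) :
    ((IrreducibleCloseds.map f hf)^[k]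
      ⟨univ, IrreducibleSpace.isIrreducible_univ X, isClosed_univ⟩ : Set X) =
      closure (range f^[k]) := by
  induction k with
  | zero => simp
  | succ k ih =>
    rw [iterate_succ_apply', IrreducibleCloseds.coe_map, ih, closure_image_closure hf,
      ← range_comp, ← iterate_succ']

theorem closure_range_iterate_eq_of_topologicalKrullDim_lt (hf : Continuous f) {n m : ℕ}
    (hn : topologicalKrullDim X < n) (hm : n ≤ m) :
    closure (range f^[m]) = closure (range f^[n]) := by
  simp only [← coe_iterate_irreducibleClosedsMap_univ hf]
  rw [(IrreducibleCloseds.map_mono hf).iterate_eq_of_krullDim_lt (subset_univ _) hn hm]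

end IterateRange

theorem mul_sPow_eq_iterate {S : Type*} {mul : S → S → S}
    (hassoc : ∀ a b c : S, mul (mul a b) c = mul a (mul b c)) (y : S) (n : ℕ) :
    mul (sPow mul y n) = (mul y)^[n + 1] := by
  induction n with
  | zero => rfl
  | succ n ih =>
    funext z
    rw [sPow, hassoc, ih, ← iterate_succ_apply]

theorem stmt_4_general {S : Type*} [TopologicalSpace S] [IrreducibleSpace S]
    (mul : S → S → S)
    (hassoc : ∀ a b c : S, mul (mul a b) c = mul a (mul b c))
    (hcontl : ∀ a : S, Continuous fun y => mul a y)
    (d : ℕ) (hd : topologicalKrullDim S + 1 = d) :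
    ∀ (y : S) (m : ℕ), d ≤ m →
      closure (Set.range (mul (sPow mul y (m - 1)))) =
        closure (Set.range (mul (sPow mul y (d - 1)))) := by
  intro y m hm
  -- `d - 1 + 1` instead of `d` absorbs the truncated subtraction in `sPow mul y (d - 1)`.
  have hdim : topologicalKrullDim S < (d - 1 + 1 : ℕ) :=
    (ENat.WithBot.add_one_le_natCast_iff.mp hd.le).trans_le (by norm_cast; omega)
  rw [mul_sPow_eq_iterate hassoc, mul_sPow_eq_iterate hassoc]
  exact closure_range_iterate_eq_of_topologicalKrullDim_lt (hcontl y) hdim (by omega)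

/-- Let `S` be an irreducible topological semigroup (associative multiplication with
continuous left and right translations) of finite topological Krull dimension `d - 1`
(i.e. `d = dim S + 1`).  Then for every `y ∈ S` and every `m ≥ d`, the closure of
`y^m S` equals the closure of `y^d S`.  (Here `sPow mul y (m-1) = y^m`.) -/
theorem stmt_4 {S : Type*} [TopologicalSpace S] [IrreducibleSpace S]
    (mul : S → S → S)
    (hassoc : ∀ a b c : S, mul (mul a b) c = mul a (mul b c))
    (hcontl : ∀ a : S, Continuous fun y => mul a y)
    (hcontr : ∀ a : S, Continuous fun y => mul y a)
    (d : ℕ) (hd : topologicalKrullDim S + 1 = d) :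
    ∀ (y : S) (m : ℕ), d ≤ m →
      closure (Set.range (mul (sPow mul y (m - 1)))) =
        closure (Set.range (mul (sPow mul y (d - 1)))) :=
  stmt_4_general mul hassoc hcontl d hd
end

section
/- Let X be a topological space with only finitely many irreducible components X_1, …, X_r, and let f : X → X be a continuous map whose image f(X) is dense in X. Then there is a permutation σ of {1, …, r} such that the closure of f(X_i) equals X_{σ(i)} for every i; in particular the closure of the image of each irreducible component is again an irreducible component. -/
/-!
The closures `closure (f '' Z)` of the images of the components are closed and irreducible, and
they cover `X`: their union is closed (there are finitely many) and contains the dense set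
`range f`. So every component `Z` lies in some `closure (f '' W)`, which in turn lies in a
component; maximality of `Z` forces `closure (f '' W) = Z`. Thus `W ↦ closure (f '' W)` maps
the finitely many components onto themselves, hence bijectively.
-/

open Set

section

variable {X : Type*} [TopologicalSpace X]

theorem IsIrreducible.exists_subset_of_subset_biUnion {ι : Type*} {s : Set X}
    (hs : IsIrreducible s) {S : Set ι} (hS : S.Finite) {t : ι → Set X}
    (ht : ∀ i ∈ S, IsClosed (t i)) (hst : s ⊆ ⋃ i ∈ S, t i) : ∃ i ∈ S, s ⊆ t i := by
  obtain ⟨_, hu, hsu⟩ := isIrreducible_iff_sUnion_isClosed.mp hs (hS.image t).toFinset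
    (by simpa using ht) (by simpa using hst)
  obtain ⟨i, hi, rfl⟩ := (hS.image t).mem_toFinset.mp hu
  exact ⟨i, hi, hsu⟩

theorem biUnion_closure_image_irreducibleComponents_eq_univ
    (hX : (irreducibleComponents X).Finite) {f : X → X} (hf_dense : Dense (range f)) :
    ⋃ Z ∈ irreducibleComponents X, closure (f '' Z) = univ := by
  have h_closed : IsClosed (⋃ Z ∈ irreducibleComponents X, closure (f '' Z)) :=
    hX.isClosed_biUnion fun _ _ => isClosed_closure
  have h_range : range f ⊆ ⋃ Z ∈ irreducibleComponents X, closure (f '' Z) := by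
    rintro _ ⟨x, rfl⟩
    exact mem_biUnion (irreducibleComponent_mem_irreducibleComponents x)
      (subset_closure ⟨x, mem_irreducibleComponent, rfl⟩)
  exact univ_subset_iff.mp (hf_dense.closure_eq ▸ h_closed.closure_subset_iff.mpr h_range)

theorem exists_mem_irreducibleComponents_closure_image_eq
    (hX : (irreducibleComponents X).Finite) {f : X → X} (hf : Continuous f)
    (hf_dense : Dense (range f)) {Z : Set X} (hZ : Z ∈ irreducibleComponents X) :
    ∃ W ∈ irreducibleComponents X, closure (f '' W) = Z := by
  obtain ⟨W, hW, hZW⟩ := hZ.prop.exists_subset_of_subset_biUnion hX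
    (fun _ _ => isClosed_closure)
    (biUnion_closure_image_irreducibleComponents_eq_univ hX hf_dense ▸ subset_univ Z)
  obtain ⟨U, hU, hWU⟩ := exists_mem_irreducibleComponents_subset_of_isIrreducible _
    (hW.prop.image f hf.continuousOn).closure
  have hZU : Z = U := hZ.eq_of_subset hU.prop (hZW.trans hWU)
  exact ⟨W, hW, hZW.antisymm' (hZU ▸ hWU)⟩

end

/-- Let `X` be a topological space with exactly finitely many irreducible components
`C 0, …, C (r-1)` (listed without repetition), and let `f : X → X` be a continuous map
with dense image.  Then there is a permutation `σ` of the index set such that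
`closure (f '' C i) = C (σ i)` for every `i`; in particular the closure of the image of
each irreducible component is again an irreducible component. -/
theorem stmt_15 {X : Type*} [TopologicalSpace X] (r : ℕ)
    (C : Fin r → Set X) (hC_inj : Function.Injective C)
    (hC_mem : ∀ i, C i ∈ irreducibleComponents X)
    (hC_all : ∀ Z ∈ irreducibleComponents X, ∃ i, Z = C i)
    (f : X → X) (hf : Continuous f) (hdense : Dense (Set.range f)) :
    ∃ σ : Equiv.Perm (Fin r), ∀ i, closure (f '' C i) = C (σ i) := by
  have hX : (irreducibleComponents X).Finite :=
    (finite_range C).subset fun Z hZ => (hC_all Z hZ).imp fun i => Eq.symm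
  have h_preimage : ∀ j, ∃ i, closure (f '' C i) = C j := fun j => by
    obtain ⟨W, hW, hWj⟩ :=
      exists_mem_irreducibleComponents_closure_image_eq hX hf hdense (hC_mem j)
    obtain ⟨i, rfl⟩ := hC_all W hW
    exact ⟨i, hWj⟩
  choose τ hτ using h_preimage
  have hτ_bij : Function.Bijective τ :=
    Finite.injective_iff_bijective.mp fun j j' h => hC_inj (by rw [← hτ j, ← hτ j', h])
  refine ⟨(Equiv.ofBijective τ hτ_bij).symm, fun i => ?_⟩
  conv_lhs => rw [← Equiv.ofBijective_apply_symm_apply τ hτ_bij i]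
  exact hτ _
end
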